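/- arXiv:2104.03830 — 3 statements merged into one kernel-verified Lean document; each statement's English description precedes it below -/
import Mathlib

section
/- The number of Latin cubes of order 3 is exactly 24; that is, the number of functions T : Fin 3 → Fin 3 → Fin 3 → Fin 3 such that fixing any two of the three arguments yields a bijection of Fin 3 in the remaining argument, equals 24. -/
def IsLatinCube {n : ℕ} (T : Fin n → Fin n → Fin n → Fin n) : Prop :=
  (∀ a b, Function.Bijective (fun c => T a b c)) ∧
  (∀ a c, Function.Bijective (fun b => T a b c)) ∧
  (∀ b c, Function.Bijective (fun a => T a b c))

/-- pairwise distinctness of the values of a function on `Fin 3` -/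
def d3 (f : Fin 3 → Fin 3) : Prop := f 0 ≠ f 1 ∧ f 0 ≠ f 2 ∧ f 1 ≠ f 2

instance : DecidablePred d3 := fun f => by unfold d3; infer_instance

lemma bij_iff (f : Fin 3 → Fin 3) : Function.Bijective f ↔ d3 f := by
  revert f; decide

instance : DecidablePred (@IsLatinCube 3) := fun T =>
  decidable_of_iff
    ((∀ a b, d3 (fun c => T a b c)) ∧ (∀ a c, d3 (fun b => T a b c)) ∧
     (∀ b c, d3 (fun a => T a b c)))
    (by simp only [IsLatinCube, bij_iff])

/-- the third element of `Fin 3` -/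
def oth (x y : Fin 3) : Fin 3 := -(x + y)

lemma key (f : Fin 3 → Fin 3) (hf : Function.Bijective f) : f 2 = oth (f 0) (f 1) := by
  revert f; decide

lemma ne01 (f : Fin 3 → Fin 3) (hf : Function.Bijective f) : f 0 ≠ f 1 :=
  fun h => absurd (hf.injective h) (by decide)

/-- a line of a Latin cube from its first two values -/
def mk (p : Fin 3 × Fin 3) : Fin 3 → Fin 3 := ![p.1, p.2, oth p.1 p.2]

/-- pairs of distinct elements of `Fin 3` -/
abbrev D3 := {p : Fin 3 × Fin 3 // p.1 ≠ p.2}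

/-- reconstruct a Latin cube from the four lines at `(a, b) ∈ {0,1} × {0,1}` -/
def recon (q : D3 × D3 × D3 × D3) : Fin 3 → Fin 3 → Fin 3 → Fin 3 :=
  fun a b c =>
    (![![mk q.1.1 c, mk q.2.1.1 c, oth (mk q.1.1 c) (mk q.2.1.1 c)],
       ![mk q.2.2.1.1 c, mk q.2.2.2.1 c, oth (mk q.2.2.1.1 c) (mk q.2.2.2.1 c)],
       ![oth (mk q.1.1 c) (mk q.2.2.1.1 c), oth (mk q.2.1.1 c) (mk q.2.2.2.1 c),
         oth (oth (mk q.1.1 c) (mk q.2.1.1 c)) (oth (mk q.2.2.1.1 c) (mk q.2.2.2.1 c))]]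
      : Fin 3 → Fin 3 → Fin 3) a b

lemma recon_extract (T : Fin 3 → Fin 3 → Fin 3 → Fin 3) (hT : IsLatinCube T) :
    recon (⟨(T 0 0 0, T 0 0 1), ne01 _ (hT.1 0 0)⟩, ⟨(T 0 1 0, T 0 1 1), ne01 _ (hT.1 0 1)⟩,
      ⟨(T 1 0 0, T 1 0 1), ne01 _ (hT.1 1 0)⟩, ⟨(T 1 1 0, T 1 1 1), ne01 _ (hT.1 1 1)⟩) = T := by
  obtain ⟨h1, h2, h3⟩ := hT
  have hc : ∀ a b, T a b 2 = oth (T a b 0) (T a b 1) := fun a b => key _ (h1 a b)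
  have hb : ∀ a c, T a 2 c = oth (T a 0 c) (T a 1 c) := fun a c => key _ (h2 a c)
  have ha : ∀ b c, T 2 b c = oth (T 0 b c) (T 1 b c) := fun b c => key _ (h3 b c)
  funext a b c
  fin_cases a <;> fin_cases b <;> fin_cases c <;>
    simp [recon, mk, ha, hb, hc]

def latinEquiv : {T : Fin 3 → Fin 3 → Fin 3 → Fin 3 // IsLatinCube T} ≃
    {q : D3 × D3 × D3 × D3 // IsLatinCube (recon q)} where
  toFun T := ⟨(⟨(T.1 0 0 0, T.1 0 0 1), ne01 _ (T.2.1 0 0)⟩,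
      ⟨(T.1 0 1 0, T.1 0 1 1), ne01 _ (T.2.1 0 1)⟩,
      ⟨(T.1 1 0 0, T.1 1 0 1), ne01 _ (T.2.1 1 0)⟩,
      ⟨(T.1 1 1 0, T.1 1 1 1), ne01 _ (T.2.1 1 1)⟩),
      by rw [recon_extract T.1 T.2]; exact T.2⟩
  invFun q := ⟨recon q.1, q.2⟩
  left_inv T := Subtype.ext (recon_extract T.1 T.2)
  right_inv q := Subtype.ext rfl

set_option maxHeartbeats 10000000 in
set_option maxRecDepth 1000000 in
theorem card_latin_cubes_order_three :
    Nat.card {T : Fin 3 → Fin 3 → Fin 3 → Fin 3 // IsLatinCube T} = 24 := by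
  rw [Nat.card_congr latinEquiv, Nat.card_eq_fintype_card]
  decide
end

section
/- The number of virtual tribrackets on a three-element set is exactly 24; that is, the number of pairs (T, S) of functions Fin 3 → Fin 3 → Fin 3 → Fin 3, each of which is a Latin cube (fixing any two arguments yields a bijection in the remaining argument), such that T satisfies (III.i) and (III.ii), S satisfies (vII), (vIII.i) and (vIII.ii), and the pair satisfies the mixed axioms (m.i) T (S a b c) c d = S (T a b (S b c d)) (S b c d) d and (m.ii) T a b (S b c d) = S a (S a b c) (T (S a b c) c d) for all a, b, c, d ∈ Fin 3, equals 24. -/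
def IsVirtualTribracket {n : ℕ}
    (T S : Fin n → Fin n → Fin n → Fin n) : Prop :=
  IsLatinCube T ∧ IsLatinCube S ∧
  ∀ a b c d : Fin n,
    T a b (T b c d) = T a (T a b c) (T (T a b c) c d) ∧
    T (T a b c) c d = T (T a b (T b c d)) (T b c d) d ∧
    S a (S a b c) c = b ∧
    S a b (S b c d) = S a (S a b c) (S (S a b c) c d) ∧
    S (S a b c) c d = S (S a b (S b c d)) (S b c d) d ∧
    T (S a b c) c d = S (T a b (S b c d)) (S b c d) d ∧
    T a b (S b c d) = S a (S a b c) (T (S a b c) c d)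

/-!
Over `Fin 3 = ℤ/3ℤ` every bijection is affine, and a function of three variables that is a
bijection in each variable separately is then affine in all of them jointly: the slope in one
variable is an affine function of another that never vanishes, and a nonconstant affine map of
`ℤ/3ℤ` hits `0`. So a Latin cube of order 3 is `(a, b, c) ↦ α a + β b + γ c + δ`, the pair
`(T, S)` is determined by two coefficient vectors, and the count is a finite check over
`81 × 81` pairs.
-/

namespace Fin3

open Fin.CommRing

theorem eq_affine_of_bijective {f : Fin 3 → Fin 3} (hf : Function.Bijective f) (x : Fin 3) :
    f x = (f 1 - f 0) * x + f 0 := by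
  revert f x
  decide

theorem slope_eq_zero_of_ne_zero {k m : Fin 3} (h : ∀ x, k * x + m ≠ 0) : k = 0 := by
  revert k m
  decide

theorem eq_affine_of_latinSquare {L : Fin 3 → Fin 3 → Fin 3}
    (hrow : ∀ x, Function.Bijective (L x)) (hcol : ∀ y, Function.Bijective fun x => L x y)
    (x y : Fin 3) :
    L x y = (L 1 0 - L 0 0) * x + (L 0 1 - L 0 0) * y + L 0 0 := by
  have hx : ∀ x y, L x y = (L 1 y - L 0 y) * x + L 0 y :=
    fun x y => eq_affine_of_bijective (hcol y) x
  have slope_affine :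
      ∀ x, L x 1 - L x 0 = (L 1 1 - L 0 1 - (L 1 0 - L 0 0)) * x + (L 0 1 - L 0 0) :=
    fun x => by rw [hx x 1, hx x 0]; ring
  have slope_ne_zero : ∀ x, L x 1 - L x 0 ≠ 0 :=
    fun x => sub_ne_zero.mpr ((hrow x).injective.ne (by decide))
  have slope_const : L 1 1 - L 0 1 - (L 1 0 - L 0 0) = 0 :=
    slope_eq_zero_of_ne_zero fun x => slope_affine x ▸ slope_ne_zero x
  rw [eq_affine_of_bijective (hrow x) y, slope_affine, slope_const, hx x 0]
  ring

abbrev Coeffs := Fin 3 × Fin 3 × Fin 3 × Fin 3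

def affineCube (p : Coeffs) : Fin 3 → Fin 3 → Fin 3 → Fin 3 :=
  fun a b c => p.1 * a + p.2.1 * b + p.2.2.1 * c + p.2.2.2

def coeffs (T : Fin 3 → Fin 3 → Fin 3 → Fin 3) : Coeffs :=
  (T 1 0 0 - T 0 0 0, T 0 1 0 - T 0 0 0, T 0 0 1 - T 0 0 0, T 0 0 0)

theorem coeffs_affineCube (p : Coeffs) : coeffs (affineCube p) = p := by
  obtain ⟨α, β, γ, δ⟩ := p
  simp only [coeffs, affineCube, Prod.mk.injEq]
  refine ⟨?_, ?_, ?_, ?_⟩ <;> ring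

theorem affineCube_coeffs {T : Fin 3 → Fin 3 → Fin 3 → Fin 3} (h : IsLatinCube T) :
    affineCube (coeffs T) = T := by
  obtain ⟨hc, hb, ha⟩ := h
  funext a b c
  have hbc := eq_affine_of_latinSquare (hc a) (fun c => hb a c) b c
  have hac := eq_affine_of_latinSquare (fun a => hc a 0) (fun c => ha 0 c)
  have hab := eq_affine_of_latinSquare (fun a => hb a 0) (fun b => ha b 0)
  rw [hbc, hab a 1, hab a 0, hac a 1]
  simp only [affineCube, coeffs]
  ring

theorem bijective_affine {k : Fin 3} (m : Fin 3) (hk : k ≠ 0) :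
    Function.Bijective fun x => k * x + m := by
  revert k m
  decide

theorem isLatinCube_affineCube_iff (p : Coeffs) :
    IsLatinCube (affineCube p) ↔ p.1 ≠ 0 ∧ p.2.1 ≠ 0 ∧ p.2.2.1 ≠ 0 := by
  obtain ⟨α, β, γ, δ⟩ := p
  have slope_ne_zero {f : Fin 3 → Fin 3} (hf : Function.Bijective f) {k : Fin 3}
      (hk : f 1 - f 0 = k) : k ≠ 0 :=
    hk ▸ sub_ne_zero.mpr (hf.injective.ne (by decide))
  constructor
  · rintro ⟨hc, hb, ha⟩
    refine ⟨slope_ne_zero (ha 0 0) ?_, slope_ne_zero (hb 0 0) ?_, slope_ne_zero (hc 0 0) ?_⟩ <;>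
      simp only [affineCube] <;> ring
  · rintro ⟨hα, hβ, hγ⟩
    refine ⟨fun a b => ?_, fun a c => ?_, fun b c => ?_⟩
    · convert bijective_affine (α * a + β * b + δ) hγ using 2; simp only [affineCube]; ring
    · convert bijective_affine (α * a + γ * c + δ) hβ using 2; simp only [affineCube]; ring
    · convert bijective_affine (β * b + γ * c + δ) hα using 2; simp only [affineCube]; ring

instance (p : Coeffs) : Decidable (IsLatinCube (affineCube p)) :=
  decidable_of_iff' _ (isLatinCube_affineCube_iff p)

instance (p q : Coeffs) : Decidable (IsVirtualTribracket (affineCube p) (affineCube q)) := by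
  unfold IsVirtualTribracket; infer_instance

def virtualTribracketEquiv :
    {TS : (Fin 3 → Fin 3 → Fin 3 → Fin 3) × (Fin 3 → Fin 3 → Fin 3 → Fin 3) //
      IsVirtualTribracket TS.1 TS.2} ≃
    {pq : Coeffs × Coeffs // IsVirtualTribracket (affineCube pq.1) (affineCube pq.2)} where
  toFun x := ⟨(coeffs x.1.1, coeffs x.1.2), by
    rw [affineCube_coeffs x.2.1, affineCube_coeffs x.2.2.1]; exact x.2⟩
  invFun y := ⟨(affineCube y.1.1, affineCube y.1.2), y.2⟩
  left_inv x := Subtype.ext <| Prod.ext (affineCube_coeffs x.2.1) (affineCube_coeffs x.2.2.1)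
  right_inv y := Subtype.ext <| Prod.ext (coeffs_affineCube _) (coeffs_affineCube _)

end Fin3

set_option maxRecDepth 100000 in
theorem card_virtual_tribrackets_order_three :
    Nat.card {TS : (Fin 3 → Fin 3 → Fin 3 → Fin 3) × (Fin 3 → Fin 3 → Fin 3 → Fin 3) //
      IsVirtualTribracket TS.1 TS.2} = 24 := by
  rw [Nat.card_congr Fin3.virtualTribracketEquiv, Nat.card_eq_fintype_card]
  decide
end

section
/- There is exactly one virtual Niebrzydowski algebra with fully defined product on a three-element set; that is, the number of triples (T, S, P), where T, S : Fin 3 → Fin 3 → Fin 3 → Fin 3 are Latin cubes and P : Fin 3 → Fin 3 → Fin 3 is a Latin square, such that (T, S) is a virtual tribracket (axioms III.i, III.ii, vII, vIII.i, vIII.ii, m.i, m.ii), (T, P) satisfies the Niebrzydowski product axioms (R4, R5.1, R5.2, R5.3, R5.4), and (S, P) satisfies the virtual product axioms (vR5.1, vR5.2, vR5.3, vR5.4), equals 1. -/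
def IsLatinSquare {n : ℕ} (P : Fin n → Fin n → Fin n) : Prop :=
  (∀ a, Function.Bijective (fun b => P a b)) ∧
  (∀ b, Function.Bijective (fun a => P a b))

def NiebrzydowskiProductAxioms {n : ℕ}
    (T : Fin n → Fin n → Fin n → Fin n) (P : Fin n → Fin n → Fin n) : Prop :=
  ∀ a b c : Fin n,
    T a (P a b) b = P a b ∧
    P a (T a b c) = T a b (P b c) ∧
    T a b c = T (T a b (P b c)) (P b c) c ∧
    P (T a b c) c = T (P a b) b c ∧
    T a b c = T a (P a b) (T (P a b) b c)

def VirtualProductAxioms {n : ℕ}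
    (S : Fin n → Fin n → Fin n → Fin n) (P : Fin n → Fin n → Fin n) : Prop :=
  ∀ a b c : Fin n,
    P a (S a b c) = S a b (P b c) ∧
    S (S a b (P b c)) (P b c) c = S a b c ∧
    P (S a b c) c = S (P a b) b c ∧
    S a (P a b) (S (P a b) b c) = S a b c

def P0 : Fin 3 → Fin 3 → Fin 3 := fun a b => -(a + b)
def T0 : Fin 3 → Fin 3 → Fin 3 → Fin 3 := fun a b c => a - b + c

theorem Pclass' : ∀ E : Fin 3 → Equiv.Perm (Fin 3),
    (∀ b, Function.Bijective (fun a => E a b)) →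
    (∀ a b : Fin 3, ∃ g : Fin 3 → Fin 3, Function.Bijective g ∧
      (∀ c, g (E b c) = E a (g c)) ∧ ∃ b', E a b' = b ∧ g b' = b) →
    ∀ a b, E a b = P0 a b := by
  set_option maxRecDepth 4000 in decide

theorem d1 : ∀ a b : Fin 3, P0 a (P0 a b) = b := by decide
theorem d2 : ∀ a : Fin 3, P0 a a = a := by decide
theorem d3_s15 : ∀ x c : Fin 3, P0 x c = x → x = c := by decide
theorem d4 : ∀ a b : Fin 3, ∃ c : Fin 3, c ≠ a ∧ c ≠ b := by decide
theorem d5 : ∀ a b c : Fin 3, c ≠ a → c ≠ b →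
    T0 a (a + b - c) c ≠ b ∧ a + (a + b - c) - c ≠ b := by decide
theorem d6 : ∀ a c : Fin 3, T0 a a c = c := by decide

theorem TsliceOff : ∀ a b : Fin 3, a ≠ b → ∀ g : Fin 3 → Fin 3,
    Function.Bijective g → (∀ c, g (P0 b c) = P0 a (g c)) →
    g (P0 a b) = b → ∀ c, g c = T0 a b c := by decide

theorem Sslice2 : ∀ a b : Fin 3, ∀ g : Fin 3 → Fin 3,
    Function.Bijective g → (∀ c, g (P0 b c) = P0 a (g c)) →
    (∀ c, g c = T0 a b c) ∨ (∀ c, g c = a + b - c) := by decide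

theorem uniq (T S P' : _) (hVT : IsVirtualTribracket T S) (hLS : IsLatinSquare P')
    (hN : NiebrzydowskiProductAxioms T P') (hV : VirtualProductAxioms S P') :
    T = T0 ∧ S = T0 ∧ P' = P0 := by
  obtain ⟨hTcube, hScube, htri⟩ := hVT
  obtain ⟨hProw, hPcol⟩ := hLS
  have hPP : P' = P0 := by
    funext a b
    have := Pclass' (fun a => Equiv.ofBijective _ (hProw a)) (fun b => hPcol b)
      (fun a b => by
        refine ⟨fun c => T a b c, hTcube.1 a b, fun c => ((hN a b c).2.1).symm, ?_⟩
        obtain ⟨b', hb'⟩ := (hProw a).2 b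
        refine ⟨b', hb', ?_⟩
        have h := (hN a b' b').1
        show T a b b' = b
        rw [show P' a b' = b from hb'] at h
        exact h) a b
    exact this
  subst hPP
  have hTdiag : ∀ a c, T a a c = c := by
    intro a c
    have h53 := (hN a a c).2.2.2.1
    rw [d2 a] at h53
    exact d3_s15 _ _ h53
  have hT : T = T0 := by
    funext a b c
    by_cases hab : a = b
    · subst hab
      rw [hTdiag, d6]
    · refine TsliceOff a b hab (fun c => T a b c) (hTcube.1 a b)
        (fun c => ((hN a b c).2.1).symm) ?_ c
      have h := (hN a (P0 a b) 0).1
      rwa [d1] at h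
  have hSslice : ∀ a b, (∀ c, S a b c = T0 a b c) ∨ (∀ c, S a b c = a + b - c) :=
    fun a b => Sslice2 a b (fun c => S a b c) (hScube.1 a b)
      (fun c => ((hV a b c).1).symm)
  have hS : S = T0 := by
    funext a b c
    rcases hSslice a b with h | h
    · exact h c
    · exfalso
      obtain ⟨c0, hca, hcb⟩ := d4 a b
      have hvII := (htri a b c0 c0).2.2.1
      rw [h c0] at hvII
      rcases hSslice a (a + b - c0) with h2 | h2
      · rw [h2 c0] at hvII
        exact (d5 a b c0 hca hcb).1 hvII
      · rw [h2 c0] at hvII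
        exact (d5 a b c0 hca hcb).2 hvII
  exact ⟨hT, hS, rfl⟩

theorem card_virtual_niebrzydowski_algebras_order_three :
    Nat.card {TSP : (Fin 3 → Fin 3 → Fin 3 → Fin 3) ×
        (Fin 3 → Fin 3 → Fin 3 → Fin 3) × (Fin 3 → Fin 3 → Fin 3) //
      IsVirtualTribracket TSP.1 TSP.2.1 ∧ IsLatinSquare TSP.2.2 ∧
      NiebrzydowskiProductAxioms TSP.1 TSP.2.2 ∧
      VirtualProductAxioms TSP.2.1 TSP.2.2} = 1 := by
  have hprop : IsVirtualTribracket T0 T0 ∧ IsLatinSquare P0 ∧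
      NiebrzydowskiProductAxioms T0 P0 ∧ VirtualProductAxioms T0 P0 := by
    unfold IsVirtualTribracket IsLatinCube IsLatinSquare
      NiebrzydowskiProductAxioms VirtualProductAxioms
    decide
  rw [Nat.card_eq_one_iff_unique]
  constructor
  · constructor
    intro ⟨⟨T, S, P'⟩, h1, h2, h3, h4⟩ ⟨⟨T', S', P''⟩, h1', h2', h3', h4'⟩
    obtain ⟨e1, e2, e3⟩ := uniq T S P' h1 h2 h3 h4
    obtain ⟨f1, f2, f3⟩ := uniq T' S' P'' h1' h2' h3' h4'
    subst e1; subst e2; subst e3; subst f1; subst f2; subst f3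
    rfl
  · exact ⟨⟨(T0, T0, P0), hprop⟩⟩
end
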